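/- Invertibility of the U-subproblem system: if α > 0, β ≥ 0, ω > 0, V ∈ ℝ^{r×p}, L ∈ ℝ^{s×m}, and B ∈ ℝ^{m×m} is invertible, then the linear map on ℝ^{m×r} given by U ↦ α U V Vᵀ + (β LᵀL + ω BᵀB) U is invertible; equivalently, the matrix α (V Vᵀ) ⊗ I_m + I_r ⊗ (β LᵀL + ω BᵀB) is positive definite. -/

import Mathlib

open Matrix Kronecker

private lemma dot_self_nonneg {n : ℕ} (v : Fin n → ℝ) : 0 ≤ v ⬝ᵥ v :=
  Finset.sum_nonneg fun i _ => mul_self_nonneg _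

private lemma dot_self_pos {n : ℕ} {v : Fin n → ℝ} (hv : v ≠ 0) : 0 < v ⬝ᵥ v := by
  obtain ⟨i, hi⟩ := Function.ne_iff.mp hv
  exact Finset.sum_pos' (fun j _ => mul_self_nonneg _)
    ⟨i, Finset.mem_univ i, mul_self_pos.mpr hi⟩

private lemma quad_tmul {n k : ℕ} (L : Matrix (Fin k) (Fin n) ℝ) (x : Fin n → ℝ) :
    x ⬝ᵥ ((Lᵀ * L) *ᵥ x) = (L *ᵥ x) ⬝ᵥ (L *ᵥ x) := by
  rw [← mulVec_mulVec, dotProduct_mulVec, vecMul_transpose]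

private lemma C_posdef {n k : ℕ} (β ω : ℝ) (hβ : 0 ≤ β) (hω : 0 < ω)
    (L : Matrix (Fin k) (Fin n) ℝ) (B : Matrix (Fin n) (Fin n) ℝ) (hB : IsUnit B) :
    (β • (Lᵀ * L) + ω • (Bᵀ * B)).PosDef := by
  rw [posDef_iff_dotProduct_mulVec]
  constructor
  · have h1 : (Lᵀ * L).IsHermitian := by
      simpa [conjTranspose_eq_transpose_of_trivial] using isHermitian_conjTranspose_mul_self L
    have h2 : (Bᵀ * B).IsHermitian := by
      simpa [conjTranspose_eq_transpose_of_trivial] using isHermitian_conjTranspose_mul_self B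
    unfold Matrix.IsHermitian at *
    simp [conjTranspose_smul, h1, h2]
  · intro x hx
    have hB' : B *ᵥ x ≠ 0 :=
      (Matrix.mulVec_injective_iff_isUnit.mpr hB).ne_iff' (mulVec_zero B) |>.mpr hx
    rw [star_trivial, add_mulVec, dotProduct_add, smul_mulVec, smul_mulVec,
      dotProduct_smul, dotProduct_smul, quad_tmul, quad_tmul]
    have := dot_self_pos hB'
    have := dot_self_nonneg (L *ᵥ x)
    positivity

private lemma kron_one_right_quad {r m : ℕ} (A : Matrix (Fin r) (Fin r) ℝ)
    (x : Fin r × Fin m → ℝ) :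
    x ⬝ᵥ ((A ⊗ₖ (1 : Matrix (Fin m) (Fin m) ℝ)) *ᵥ x) =
      ∑ j : Fin m, (fun i => x (i, j)) ⬝ᵥ (A *ᵥ fun i => x (i, j)) := by
  simp only [dotProduct, mulVec, kroneckerMap_apply, one_apply, Fintype.sum_prod_type,
    mul_ite, mul_one, mul_zero, ite_mul, zero_mul, Finset.sum_ite_eq, Finset.sum_ite_eq',
    Finset.mem_univ, if_true]
  exact Finset.sum_comm

private lemma kron_one_left_quad {r m : ℕ} (C : Matrix (Fin m) (Fin m) ℝ)
    (x : Fin r × Fin m → ℝ) :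
    x ⬝ᵥ (((1 : Matrix (Fin r) (Fin r) ℝ) ⊗ₖ C) *ᵥ x) =
      ∑ i : Fin r, (fun j => x (i, j)) ⬝ᵥ (C *ᵥ fun j => x (i, j)) := by
  simp only [dotProduct, mulVec, kroneckerMap_apply, one_apply, Fintype.sum_prod_type,
    mul_ite, mul_one, mul_zero, ite_mul, zero_mul, one_mul, Finset.sum_ite_eq, Finset.sum_ite_eq',
    Finset.mem_univ, if_true]
  refine Finset.sum_congr rfl fun a _ => Finset.sum_congr rfl fun b _ => ?_
  congr 1
  rw [Finset.sum_comm]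
  simp

private lemma kron_mulVec_entry {r m : ℕ} (A : Matrix (Fin r) (Fin r) ℝ)
    (C : Matrix (Fin m) (Fin m) ℝ) (α : ℝ) (x : Fin r × Fin m → ℝ) (i : Fin r) (j : Fin m) :
    ((α • (A ⊗ₖ (1 : Matrix (Fin m) (Fin m) ℝ)) + (1 : Matrix (Fin r) (Fin r) ℝ) ⊗ₖ C) *ᵥ x) (i, j)
      = α * ((A *ᵥ fun k => x (k, j)) i) + ((C *ᵥ fun l => x (i, l)) j) := by
  simp only [mulVec, dotProduct, Matrix.add_apply, Matrix.smul_apply, kroneckerMap_apply, one_apply,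
    Fintype.sum_prod_type, smul_eq_mul, mul_ite, mul_one, mul_zero, ite_mul, zero_mul,
    Finset.sum_ite_eq, Finset.sum_ite_eq', Finset.mem_univ, if_true, add_mul,
    Finset.sum_add_distrib, Finset.mul_sum]
  congr 1
  · exact Finset.sum_congr rfl fun a _ => by ring
  · rw [Finset.sum_comm]
    simp


/-- Invertibility of the U-subproblem system: if `α > 0`, `β ≥ 0`, `ω > 0` and `B` is
invertible, then `U ↦ α U V Vᵀ + (β LᵀL + ω BᵀB) U` is a bijective (linear) map on
`ℝ^{m×r}`; equivalently, `α (VVᵀ) ⊗ I_m + I_r ⊗ (β LᵀL + ω BᵀB)` is positive definite. -/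
theorem U_system_invertible {m r p s : ℕ} (α β ω : ℝ)
    (hα : 0 < α) (hβ : 0 ≤ β) (hω : 0 < ω)
    (V : Matrix (Fin r) (Fin p) ℝ) (L : Matrix (Fin s) (Fin m) ℝ)
    (B : Matrix (Fin m) (Fin m) ℝ) (hB : IsUnit B) :
    Function.Bijective (fun U : Matrix (Fin m) (Fin r) ℝ =>
      α • (U * V * Vᵀ) + (β • (Lᵀ * L) + ω • (Bᵀ * B)) * U) ∧
    (α • ((V * Vᵀ) ⊗ₖ (1 : Matrix (Fin m) (Fin m) ℝ)) +
      (1 : Matrix (Fin r) (Fin r) ℝ) ⊗ₖ (β • (Lᵀ * L) + ω • (Bᵀ * B))).PosDef := by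
  set C : Matrix (Fin m) (Fin m) ℝ := β • (Lᵀ * L) + ω • (Bᵀ * B) with hCdef
  have hC : C.PosDef := C_posdef β ω hβ hω L B hB
  have hAsym : (V * Vᵀ)ᵀ = V * Vᵀ := by rw [transpose_mul, transpose_transpose]
  set M : Matrix (Fin r × Fin m) (Fin r × Fin m) ℝ :=
    α • ((V * Vᵀ) ⊗ₖ (1 : Matrix (Fin m) (Fin m) ℝ)) +
      (1 : Matrix (Fin r) (Fin r) ℝ) ⊗ₖ C with hMdef
  -- quadratic form nonneg for V*Vᵀ
  have hVq : ∀ y : Fin r → ℝ, 0 ≤ y ⬝ᵥ ((V * Vᵀ) *ᵥ y) := by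
    intro y
    have h' : V * Vᵀ = Vᵀᵀ * Vᵀ := by rw [transpose_transpose]
    rw [h', quad_tmul]
    exact dot_self_nonneg _
  have hM : M.PosDef := by
    rw [posDef_iff_dotProduct_mulVec]
    constructor
    · rw [hMdef]
      have h1 : ((V * Vᵀ) ⊗ₖ (1 : Matrix (Fin m) (Fin m) ℝ))ᵀ
          = (V * Vᵀ) ⊗ₖ (1 : Matrix (Fin m) (Fin m) ℝ) := by
        rw [← kroneckerMap_transpose, hAsym, transpose_one]
      have h2 : ((1 : Matrix (Fin r) (Fin r) ℝ) ⊗ₖ C)ᵀ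
          = (1 : Matrix (Fin r) (Fin r) ℝ) ⊗ₖ C := by
        rw [← kroneckerMap_transpose, transpose_one]
        have hCt : Cᵀ = C := by
          have := hC.isHermitian
          rwa [Matrix.IsHermitian, conjTranspose_eq_transpose_of_trivial] at this
        rw [hCt]
      show _ᴴ = _
      rw [conjTranspose_eq_transpose_of_trivial, transpose_add, transpose_smul, h1, h2]
    · intro x hx
      rw [star_trivial, add_mulVec, dotProduct_add, smul_mulVec, dotProduct_smul,
        kron_one_right_quad, kron_one_left_quad]
      have hpos : 0 < ∑ i : Fin r, (fun j => x (i, j)) ⬝ᵥ (C *ᵥ fun j => x (i, j)) := by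
        obtain ⟨⟨i0, j0⟩, hij⟩ := Function.ne_iff.mp hx
        refine Finset.sum_pos' (fun i _ => ?_) ⟨i0, Finset.mem_univ i0, ?_⟩
        · have := hC.posSemidef.dotProduct_mulVec_nonneg (fun j => x (i, j))
          rwa [star_trivial] at this
        · have hz : (fun j => x (i0, j)) ≠ 0 := Function.ne_iff.mpr ⟨j0, hij⟩
          have := hC.dotProduct_mulVec_pos hz
          rwa [star_trivial] at this
      have hnn : 0 ≤ ∑ j : Fin m, (fun i => x (i, j)) ⬝ᵥ ((V * Vᵀ) *ᵥ fun i => x (i, j)) :=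
        Finset.sum_nonneg fun j _ => hVq _
      have := mul_nonneg hα.le hnn
      rw [smul_eq_mul]
      linarith
  refine ⟨?_, hM⟩
  -- vectorization equivalence
  let e : Matrix (Fin m) (Fin r) ℝ ≃ (Fin r × Fin m → ℝ) :=
    { toFun := fun U p => U p.2 p.1
      invFun := fun x j i => x (i, j)
      left_inv := fun U => rfl
      right_inv := fun x => rfl }
  have key : (fun U : Matrix (Fin m) (Fin r) ℝ =>
      α • (U * V * Vᵀ) + C * U) = fun U => e.symm (M *ᵥ (e U)) := by
    funext U
    ext j i
    show (α • (U * V * Vᵀ) + C * U) j i = (M *ᵥ (e U)) (i, j)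
    rw [hMdef, kron_mulVec_entry]
    have hsym : ∀ (a : Fin r) (k : Fin r), (V * Vᵀ) k a = (V * Vᵀ) a k := by
      intro a k
      conv_rhs => rw [← hAsym]
      exact (transpose_apply _ a k).symm
    have h1 : ((V * Vᵀ) *ᵥ fun k => (e U) (k, j)) i = (U * (V * Vᵀ)) j i := by
      simp only [mulVec, dotProduct, Matrix.mul_apply.symm]
      rw [Matrix.mul_apply]
      refine Finset.sum_congr rfl fun k _ => ?_
      rw [mul_comm, ← hsym]
      rfl
    have h2 : (C *ᵥ fun l => (e U) (i, l)) j = (C * U) j i := by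
      simp only [mulVec, dotProduct, mul_apply]
      rfl
    rw [h1, h2]
    simp [mul_assoc, Matrix.mul_assoc]
  have hMvec : Function.Bijective (fun x : Fin r × Fin m → ℝ => M *ᵥ x) :=
    ⟨Matrix.mulVec_injective_iff_isUnit.mpr hM.isUnit,
     Matrix.mulVec_surjective_iff_isUnit.mpr hM.isUnit⟩
  rw [show (fun U : Matrix (Fin m) (Fin r) ℝ =>
      α • (U * V * Vᵀ) + C * U) = fun U => e.symm (M *ᵥ (e U)) from key]
  exact e.symm.bijective.comp (hMvec.comp e.bijective)
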